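/- Let K be a field. For pairwise distinct x, y, z, s ∈ K define the cross-ratio cr(x,y,z,s) = (s−x)(y−z)/((y−x)(s−z)). Let I be a 12-element set with elements labeled 1, 2, 3, a, b, c, α, β, γ, m, n, p. Suppose φ, ψ : I → K are injective maps which agree on the six labels {1, m, a, b, p, n} and which satisfy cr(φ(q_1),φ(q_2),φ(q_3),φ(q_4)) = cr(ψ(q_1),ψ(q_2),ψ(q_3),ψ(q_4)) for each of the nine ordered quadruples (p,1,b,γ), (p,2,c,β), (p,3,a,α), (n,γ,a,2), (n,β,b,3), (n,α,c,1), (m,1,2,3), (m,γ,β,α), (m,b,c,a). Then φ = ψ. -/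
import Mathlib


/-- The twelve labels `1, 2, 3, a, b, c, α, β, γ, m, n, p` of the dual Hesse
configuration. -/
inductive Label : Type
  | one | two | three | a | b | c | al | be | ga | m | n | p
deriving DecidableEq, Repr

/-- The cross-ratio `{x, y, z, s} = (s−x)(y−z) / ((y−x)(s−z))`. -/
def cr {K : Type*} [Field K] (x y z s : K) : K :=
  ((s - x) * (y - z)) / ((y - x) * (s - z))

/-- The cross-ratio map `s ↦ cr x y z s` is injective away from `x, y, z`. -/
lemma cr_inj4 {K : Type*} [Field K] {x y z s s' : K}
    (hyx : y ≠ x) (hyz : y ≠ z) (hxz : x ≠ z) (hsz : s ≠ z) (hs'z : s' ≠ z)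
    (h : cr x y z s = cr x y z s') : s = s' := by
  unfold cr at h
  rw [div_eq_div_iff (by simp [sub_ne_zero.2 hyx, sub_ne_zero.2 hsz])
      (by simp [sub_ne_zero.2 hyx, sub_ne_zero.2 hs'z])] at h
  have key : (s - s') * ((y - z) * (y - x) * (x - z)) = 0 := by linear_combination h
  rcases mul_eq_zero.1 key with h0 | h0
  · exact sub_eq_zero.1 h0
  · exfalso
    rcases mul_eq_zero.1 h0 with h1 | h1
    · rcases mul_eq_zero.1 h1 with h2 | h2
      · exact hyz (sub_eq_zero.1 h2)
      · exact hyx (sub_eq_zero.1 h2)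
    · exact hxz (sub_eq_zero.1 h1)

/-- The cross-ratio map `z ↦ cr x y z s` is injective away from `x, y, s`. -/
lemma cr_inj3 {K : Type*} [Field K] {x y z z' s : K}
    (hyx : y ≠ x) (hsx : s ≠ x) (hsy : s ≠ y) (hsz : s ≠ z) (hsz' : s ≠ z')
    (h : cr x y z s = cr x y z' s) : z = z' := by
  unfold cr at h
  rw [div_eq_div_iff (by simp [sub_ne_zero.2 hyx, sub_ne_zero.2 hsz])
      (by simp [sub_ne_zero.2 hyx, sub_ne_zero.2 hsz'])] at h
  have key : (z - z') * ((s - x) * (y - x) * (y - s)) = 0 := by linear_combination h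
  rcases mul_eq_zero.1 key with h0 | h0
  · exact sub_eq_zero.1 h0
  · exfalso
    rcases mul_eq_zero.1 h0 with h1 | h1
    · rcases mul_eq_zero.1 h1 with h2 | h2
      · exact hsx (sub_eq_zero.1 h2)
      · exact hyx (sub_eq_zero.1 h2)
    · exact hsy (sub_eq_zero.1 h1).symm

/-- Injectivity of the dual Hesse hypergraph morphism on configurations of 12 distinct
points of the line: two injective assignments of elements of a field `K` to the 12
labels which agree on the six labels `{1, m, a, b, p, n}` and have equal cross-ratios
along the nine hyperedges of the dual Hesse hypergraph coincide. -/
theorem dual_hesse_injective {K : Type*} [Field K] (φ ψ : Label → K)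
    (hφ : Function.Injective φ) (hψ : Function.Injective ψ)
    (h1 : φ .one = ψ .one) (hm : φ .m = ψ .m) (ha : φ .a = ψ .a)
    (hb : φ .b = ψ .b) (hp : φ .p = ψ .p) (hn : φ .n = ψ .n)
    (w1 : cr (φ .p) (φ .one) (φ .b) (φ .ga) = cr (ψ .p) (ψ .one) (ψ .b) (ψ .ga))
    (w2 : cr (φ .p) (φ .two) (φ .c) (φ .be) = cr (ψ .p) (ψ .two) (ψ .c) (ψ .be))
    (w3 : cr (φ .p) (φ .three) (φ .a) (φ .al) = cr (ψ .p) (ψ .three) (ψ .a) (ψ .al))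
    (w4 : cr (φ .n) (φ .ga) (φ .a) (φ .two) = cr (ψ .n) (ψ .ga) (ψ .a) (ψ .two))
    (w5 : cr (φ .n) (φ .be) (φ .b) (φ .three) = cr (ψ .n) (ψ .be) (ψ .b) (ψ .three))
    (w6 : cr (φ .n) (φ .al) (φ .c) (φ .one) = cr (ψ .n) (ψ .al) (ψ .c) (ψ .one))
    (w7 : cr (φ .m) (φ .one) (φ .two) (φ .three) = cr (ψ .m) (ψ .one) (ψ .two) (ψ .three))
    (w8 : cr (φ .m) (φ .ga) (φ .be) (φ .al) = cr (ψ .m) (ψ .ga) (ψ .be) (ψ .al))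
    (w9 : cr (φ .m) (φ .b) (φ .c) (φ .a) = cr (ψ .m) (ψ .b) (ψ .c) (ψ .a)) :
    φ = ψ := by
  -- Step 1: γ from the quadruple (p, 1, b, γ).
  rw [← hp, ← h1, ← hb] at w1
  have hga : φ .ga = ψ .ga :=
    cr_inj4 (hφ.ne (by decide)) (hφ.ne (by decide)) (hφ.ne (by decide))
      (hφ.ne (by decide)) (by rw [hb]; exact hψ.ne (by decide)) w1
  -- Step 2: 2 from the quadruple (n, γ, a, 2).
  rw [← hn, ← hga, ← ha] at w4
  have h2 : φ .two = ψ .two :=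
    cr_inj4 (hφ.ne (by decide)) (hφ.ne (by decide)) (hφ.ne (by decide))
      (hφ.ne (by decide)) (by rw [ha]; exact hψ.ne (by decide)) w4
  -- Step 3: 3 from the quadruple (m, 1, 2, 3).
  rw [← hm, ← h1, ← h2] at w7
  have h3 : φ .three = ψ .three :=
    cr_inj4 (hφ.ne (by decide)) (hφ.ne (by decide)) (hφ.ne (by decide))
      (hφ.ne (by decide)) (by rw [h2]; exact hψ.ne (by decide)) w7
  -- Step 4: α from the quadruple (p, 3, a, α).
  rw [← hp, ← h3, ← ha] at w3
  have hal : φ .al = ψ .al :=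
    cr_inj4 (hφ.ne (by decide)) (hφ.ne (by decide)) (hφ.ne (by decide))
      (hφ.ne (by decide)) (by rw [ha]; exact hψ.ne (by decide)) w3
  -- Step 5: c from the quadruple (n, α, c, 1).
  rw [← hn, ← hal, ← h1] at w6
  have hc : φ .c = ψ .c :=
    cr_inj3 (hφ.ne (by decide)) (hφ.ne (by decide)) (hφ.ne (by decide))
      (hφ.ne (by decide)) (by rw [h1]; exact hψ.ne (by decide)) w6
  -- Step 6: β from the quadruple (p, 2, c, β).
  rw [← hp, ← h2, ← hc] at w2
  have hbe : φ .be = ψ .be :=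
    cr_inj4 (hφ.ne (by decide)) (hφ.ne (by decide)) (hφ.ne (by decide))
      (hφ.ne (by decide)) (by rw [hc]; exact hψ.ne (by decide)) w2
  funext i
  cases i <;> assumption
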